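/- arXiv:2209.07745 — 2 statements merged into one kernel-verified Lean document; each statement's English description precedes it below -/
import Mathlib

section
/- If a history-deterministic Parikh automaton (A, C) is length-complete, then the Parikh automaton (A', C) obtained by relabeling every input letter to a single letter # accepts exactly {#}*, and (A', C) is history-deterministic if and only if (A, C) has a safe word. -/
open scoped BigOperators

/-- A set `C ⊆ ℕ^d` is linear if `C = {v₀ + Σᵢ cᵢ vᵢ | cᵢ ∈ ℕ}` for some vectors. -/
def IsLinear {d : ℕ} (C : Set (Fin d → ℕ)) : Prop :=
  ∃ (k : ℕ) (v₀ : Fin d → ℕ) (v : Fin k → Fin d → ℕ),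
    C = {x | ∃ c : Fin k → ℕ, x = v₀ + ∑ i, c i • v i}

/-- A set is semilinear if it is a finite union of linear sets. -/
def IsSemilinear {d : ℕ} (C : Set (Fin d → ℕ)) : Prop :=
  ∃ (m : ℕ) (Cs : Fin m → Set (Fin d → ℕ)),
    (∀ i, IsLinear (Cs i)) ∧ C = ⋃ i, Cs i

/-- A Parikh automaton over alphabet `A` of dimension `d`: an NFA whose transitions are
labeled by a letter and a vector in `ℕ^d`, together with a semilinear acceptance set `C`. -/
structure PA (A : Type) (d : ℕ) where
  n : ℕ
  init : Fin n
  final : Set (Fin n)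
  trans : Set (Fin n × (A × (Fin d → ℕ)) × Fin n)
  transFin : trans.Finite
  C : Set (Fin d → ℕ)
  hC : IsSemilinear C

namespace PA

variable {A : Type} {d : ℕ}

/-- The type of transitions of a Parikh automaton. -/
abbrev Tr (P : PA A d) := Fin P.n × (A × (Fin d → ℕ)) × Fin P.n

/-- The word processed by a run (its Σ-projection). -/
def word (P : PA A d) (ρ : List P.Tr) : List A := ρ.map (fun t => t.2.1.1)

/-- The extended Parikh image of a run: the sum of the vector labels. -/
def image (P : PA A d) (ρ : List P.Tr) : Fin d → ℕ := (ρ.map (fun t => t.2.1.2)).sum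

/-- The last state of a run (the initial state for the empty run). -/
def lastState (P : PA A d) (ρ : List P.Tr) : Fin P.n :=
  (ρ.getLast?).elim P.init (fun t => t.2.2)

/-- A run: a sequence of transitions of `P`, consecutively matching, starting in the
initial state. -/
def IsRun (P : PA A d) (ρ : List P.Tr) : Prop :=
  (∀ t ∈ ρ, t ∈ P.trans) ∧
  ρ.Chain' (fun t t' => t.2.2 = t'.1) ∧
  (∀ t, ρ.head? = some t → t.1 = P.init)

/-- An accepting run: a run ending in an accepting state whose extended Parikh image
lies in `C`. -/
def Accepting (P : PA A d) (ρ : List P.Tr) : Prop :=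
  P.IsRun ρ ∧ P.lastState ρ ∈ P.final ∧ P.image ρ ∈ P.C

/-- The language of a Parikh automaton. -/
def Lang (P : PA A d) : Set (List A) :=
  {w | ∃ ρ, P.Accepting ρ ∧ P.word ρ = w}

/-- Determinism: for every state and letter there is at most one outgoing transition. -/
def Deterministic (P : PA A d) : Prop :=
  ∀ (q : Fin P.n) (a : A),
    Set.Subsingleton {p : Fin P.n × (Fin d → ℕ) | (q, (a, p.2), p.1) ∈ P.trans}

/-- Iterating a resolver `r` (fed the history and the next letter) along a word;
`pre` is the prefix read so far. -/
def iterResAux (P : PA A d) (r : List A → A → P.Tr) : List A → List A → List P.Tr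
  | _, [] => []
  | pre, a :: rest => r pre a :: P.iterResAux r (pre ++ [a]) rest

/-- The run built by iterating the resolver `r` letter by letter along `w`. -/
def iterRes (P : PA A d) (r : List A → A → P.Tr) (w : List A) : List P.Tr :=
  P.iterResAux r [] w

/-- `r` is a resolver: for every accepted word `w`, iterating `r` along `w` yields an
accepting run processing `w`. -/
def IsResolver (P : PA A d) (r : List A → A → P.Tr) : Prop :=
  ∀ w ∈ P.Lang, P.Accepting (P.iterRes r w) ∧ P.word (P.iterRes r w) = w

/-- A Parikh automaton is history-deterministic if it has a resolver. -/
def HistoryDeterministic (P : PA A d) : Prop := ∃ r, P.IsResolver r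

end PA

namespace PA

variable {A : Type} {d : ℕ}

/-- Relabeling every input letter of a Parikh automaton to the single letter `#`
(here: the unique element of `Unit`). -/
def relabel (P : PA A d) : PA Unit d where
  n := P.n
  init := P.init
  final := P.final
  trans := (fun t : P.Tr =>
    ((t.1, (((), t.2.1.2), t.2.2)) : Fin P.n × (Unit × (Fin d → ℕ)) × Fin P.n)) '' P.trans
  transFin := P.transFin.image _
  C := P.C
  hC := P.hC

/-- Length-completeness: the language contains a word of every length. -/
def LengthComplete (P : PA A d) : Prop := ∀ n : ℕ, ∃ w ∈ P.Lang, w.length = n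

/-- A safe word: an infinite word all of whose finite prefixes are accepted. -/
def SafeWord (P : PA A d) (σ : ℕ → A) : Prop :=
  ∀ n : ℕ, (List.ofFn (fun i : Fin n => σ i)) ∈ P.Lang

end PA

/-!
Over a one-letter alphabet a resolver amounts to an infinite sequence of transitions, so the
relabeled automaton, which accepts all of `#*` by length-completeness, is history-deterministic
iff it has an infinite run all of whose prefixes are accepting. Such a run lifts, transition by
transition, to a run of the original automaton along an infinite word, which is then safe.
Conversely, by determinism the accepting run on each prefix of a safe word is a prefix of the run
on every longer prefix, so these runs assemble into one infinite run, whose relabeling is such a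
run.
-/

namespace PA

variable {A : Type} {d : ℕ}

/-- `IsRun` with an arbitrary start state, so that the tail of a run is again a run. -/
def IsRunFrom (P : PA A d) (q : Fin P.n) (ρ : List P.Tr) : Prop :=
  (∀ t ∈ ρ, t ∈ P.trans) ∧
  ρ.IsChain (fun t t' => t.2.2 = t'.1) ∧
  (∀ t, ρ.head? = some t → t.1 = q)

def SafeRun (P : PA A d) (s : ℕ → P.Tr) : Prop :=
  ∀ n : ℕ, P.Accepting (List.ofFn fun i : Fin n => s i)

def relabelTr (P : PA A d) (t : P.Tr) : P.relabel.Tr := (t.1, (((), t.2.1.2), t.2.2))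

variable {P : PA A d}

theorem isRunFrom_cons {q : Fin P.n} {t : P.Tr} {ρ : List P.Tr} :
    P.IsRunFrom q (t :: ρ) ↔ t ∈ P.trans ∧ t.1 = q ∧ P.IsRunFrom t.2.2 ρ := by
  simp only [IsRunFrom, List.mem_cons, forall_eq_or_imp, List.isChain_cons, List.head?_cons,
    Option.some.injEq, forall_eq']
  constructor
  · rintro ⟨⟨ht, hρ⟩, ⟨hlink, hchain⟩, hq⟩
    exact ⟨ht, hq, hρ, hchain, fun t' h => (hlink t' h).symm⟩
  · rintro ⟨ht, hq, hρ, hchain, hlink⟩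
    exact ⟨⟨ht, hρ⟩, ⟨fun t' h => (hlink t' h).symm, hchain⟩, hq⟩

theorem IsRunFrom.take {q : Fin P.n} {ρ : List P.Tr} (h : P.IsRunFrom q ρ) (k : ℕ) :
    P.IsRunFrom q (ρ.take k) := by
  induction ρ generalizing q k with
  | nil => simpa using h
  | cons t ρ ih =>
    cases k with
    | zero => simp [IsRunFrom]
    | succ k =>
      rw [List.take_succ_cons, isRunFrom_cons] at *
      exact ⟨h.1, h.2.1, ih h.2.2 k⟩

theorem Deterministic.eq_of_mem_trans (hdet : P.Deterministic) {t t' : P.Tr}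
    (ht : t ∈ P.trans) (ht' : t' ∈ P.trans) (hsrc : t.1 = t'.1) (hletter : t.2.1.1 = t'.2.1.1) :
    t = t' := by
  obtain ⟨q, ⟨a, v⟩, p⟩ := t
  obtain ⟨q', ⟨a', v'⟩, p'⟩ := t'
  dsimp only at hsrc hletter
  subst hsrc hletter
  cases hdet q a (x := (p, v)) (y := (p', v')) ht ht'
  rfl

theorem Deterministic.eq_of_isRunFrom (hdet : P.Deterministic) {q : Fin P.n} {ρ ρ' : List P.Tr}
    (h : P.IsRunFrom q ρ) (h' : P.IsRunFrom q ρ') (hw : P.word ρ = P.word ρ') : ρ = ρ' := by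
  induction ρ generalizing q ρ' with
  | nil => cases ρ' <;> simp_all [word]
  | cons t ρ ih =>
    cases ρ' with
    | nil => simp [word] at hw
    | cons t' ρ' =>
      simp only [word, List.map_cons, List.cons.injEq] at hw
      rw [isRunFrom_cons] at h h'
      obtain rfl : t = t' := hdet.eq_of_mem_trans h.1 h'.1 (h.2.1.trans h'.2.1.symm) hw.1
      rw [ih h.2.2 h'.2.2 hw.2]

theorem length_word (ρ : List P.Tr) : (P.word ρ).length = ρ.length :=
  List.length_map _

theorem word_ofFn {n : ℕ} (s : ℕ → P.Tr) :
    P.word (List.ofFn fun i : Fin n => s i) = List.ofFn fun i : Fin n => (s i).2.1.1 := by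
  simp [word, List.map_ofFn, Function.comp_def]

theorem iterResAux_eq_ofFn (r : List A → A → P.Tr) (pre w : List A) :
    P.iterResAux r pre w = List.ofFn (fun i : Fin w.length => r (pre ++ w.take i) w[i]) := by
  induction w generalizing pre with
  | nil => rfl
  | cons a w ih => simp [iterResAux, ih, List.ofFn_succ]

theorem iterRes_eq_ofFn (r : List A → A → P.Tr) (w : List A) :
    P.iterRes r w = List.ofFn (fun i : Fin w.length => r (w.take i) w[i]) :=
  iterResAux_eq_ofFn r [] w

theorem SafeRun.mem_trans {s : ℕ → P.Tr} (hs : P.SafeRun s) (i : ℕ) : s i ∈ P.trans :=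
  (hs (i + 1)).1.1 _ (List.mem_ofFn.2 ⟨Fin.last i, rfl⟩)

theorem SafeRun.safeWord {s : ℕ → P.Tr} (hs : P.SafeRun s) :
    P.SafeWord fun i => (s i).2.1.1 :=
  fun n => ⟨_, hs n, word_ofFn s⟩

theorem SafeWord.exists_safeRun (hdet : P.Deterministic) {σ : ℕ → A} (hσ : P.SafeWord σ) :
    ∃ s, P.SafeRun s := by
  choose R hR hRw using hσ
  have hlen (n : ℕ) : (R n).length = n := by
    simpa [length_word] using congrArg List.length (hRw n)
  have hprefix {m n : ℕ} (hmn : m ≤ n) : (R n).take m = R m := by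
    refine hdet.eq_of_isRunFrom (IsRunFrom.take (hR n).1 m) (hR m).1 ?_
    rw [word, List.map_take, ← word, hRw, hRw]
    exact List.ext_getElem (by simp [hmn]) (by simp)
  refine ⟨fun i => (R (i + 1))[i]'(by simp [hlen]), fun n => ?_⟩
  convert hR n using 1
  refine List.ext_getElem (by simp [hlen]) fun i hi _ => ?_
  simp only [List.getElem_ofFn]
  simp_rw [← hprefix (show i + 1 ≤ n by simpa [hlen] using hi), List.getElem_take]

theorem historyDeterministic_iff_exists_safeRun {Q : PA Unit d} (hQ : Q.Lang = Set.univ) :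
    Q.HistoryDeterministic ↔ ∃ t, Q.SafeRun t := by
  constructor
  · rintro ⟨r, hr⟩
    refine ⟨fun i => r (List.replicate i ()) (), fun n => ?_⟩
    have hacc := (hr (List.replicate n ()) (hQ ▸ trivial)).1
    rw [iterRes_eq_ofFn] at hacc
    convert hacc using 1
    exact List.ext_getElem (by simp) fun i _ _ => by simp [List.take_replicate]
  · rintro ⟨t, ht⟩
    refine ⟨fun pre _ => t pre.length, fun w _ => ?_⟩
    have hrun : Q.iterRes (fun pre _ => t pre.length) w = List.ofFn fun i : Fin w.length => t i := by
      rw [iterRes_eq_ofFn]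
      simp
    rw [hrun]
    exact ⟨ht _, List.length_injective (by simp [length_word])⟩

theorem relabel_accepting_map_iff {ρ : List P.Tr} (hρ : ∀ t ∈ ρ, t ∈ P.trans) :
    P.relabel.Accepting (ρ.map P.relabelTr) ↔ P.Accepting ρ := by
  have hmem : ∀ t ∈ ρ.map P.relabelTr, t ∈ P.relabel.trans :=
    List.forall_mem_map.2 fun t ht => Set.mem_image_of_mem _ (hρ t ht)
  have hinit : (∀ t, (ρ.map P.relabelTr).head? = some t → t.1 = P.relabel.init) ↔
      ∀ t, ρ.head? = some t → t.1 = P.init := by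
    rw [List.head?_map]
    cases ρ.head? with
    | none => simp
    | some t =>
      exact ⟨fun h _ ht => by cases ht; exact h _ rfl, fun h _ ht => by cases ht; exact h _ rfl⟩
  have hlast : P.relabel.lastState (ρ.map P.relabelTr) = P.lastState ρ := by
    simp only [lastState, List.getLast?_map]
    cases ρ.getLast? <;> rfl
  have himage : P.relabel.image (ρ.map P.relabelTr) = P.image ρ := by
    simp only [image, List.map_map]
    rfl
  simp only [Accepting, IsRun, hlast, himage]
  exact and_congr (and_congr ⟨fun _ => hρ, fun _ => hmem⟩ (and_congr (List.isChain_map _) hinit))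
    Iff.rfl

theorem SafeRun.relabel {s : ℕ → P.Tr} (hs : P.SafeRun s) :
    P.relabel.SafeRun (P.relabelTr ∘ s) := fun n => by
  simpa [List.map_ofFn, Function.comp_def] using (relabel_accepting_map_iff (hs n).1.1).2 (hs n)

theorem SafeRun.exists_of_relabel {t : ℕ → P.relabel.Tr} (ht : P.relabel.SafeRun t) :
    ∃ s, P.SafeRun s := by
  have hlift (i : ℕ) : ∃ u ∈ P.trans, P.relabelTr u = t i := ht.mem_trans i
  choose s hs hst using hlift
  refine ⟨s, fun n => (relabel_accepting_map_iff ?_).1 ?_⟩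
  · simp [hs]
  · simpa [List.map_ofFn, Function.comp_def, hst] using ht n

theorem exists_safeRun_relabel_iff (hdet : P.Deterministic) :
    (∃ t, P.relabel.SafeRun t) ↔ ∃ σ, P.SafeWord σ :=
  ⟨fun ⟨_, ht⟩ => let ⟨_, hs⟩ := ht.exists_of_relabel; ⟨_, hs.safeWord⟩,
    fun ⟨_, hσ⟩ => let ⟨_, hs⟩ := hσ.exists_safeRun hdet; ⟨_, hs.relabel⟩⟩

theorem LengthComplete.relabel_lang_eq_univ (hlc : P.LengthComplete) :
    P.relabel.Lang = Set.univ := by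
  refine Set.eq_univ_of_forall fun w => ?_
  obtain ⟨_, ⟨ρ, hρ, rfl⟩, hlen⟩ := hlc w.length
  exact ⟨ρ.map P.relabelTr, (relabel_accepting_map_iff hρ.1.1).2 hρ,
    List.length_injective (by simpa [length_word] using hlen)⟩

end PA

theorem relabel_lang_univ_and_hd_iff_safe_general {A : Type} {d : ℕ} (P : PA A d)
    (hdet : P.Deterministic) (hlc : P.LengthComplete) :
    P.relabel.Lang = Set.univ ∧
      (P.relabel.HistoryDeterministic ↔ ∃ σ : ℕ → A, P.SafeWord σ) := by
  have hlang := hlc.relabel_lang_eq_univ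
  exact ⟨hlang, (PA.historyDeterministic_iff_exists_safeRun hlang).trans
    (PA.exists_safeRun_relabel_iff hdet)⟩

/-- For a deterministic, length-complete Parikh automaton `P`, the relabeled automaton
accepts exactly `{#}*`, and it is history-deterministic iff `P` has a safe word. -/
theorem relabel_lang_univ_and_hd_iff_safe {A : Type} {d : ℕ} (P : PA A d)
    (hdet : P.Deterministic) (hhd : P.HistoryDeterministic) (hlc : P.LengthComplete) :
    P.relabel.Lang = Set.univ ∧
      (P.relabel.HistoryDeterministic ↔ ∃ σ : ℕ → A, P.SafeWord σ) :=
  relabel_lang_univ_and_hd_iff_safe_general P hdet hlc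
end

section
/- For every semilinear set C ⊆ ℕ^d there is a Presburger formula φ(x₀,...,x_{d−1}) defining it, and conversely every set of the form {v ∈ ℕ^d | (ℕ,+,<,0,1) ⊨ φ(v)} for a first-order formula φ in the language of Presburger arithmetic is semilinear. -/
open scoped BigOperators

/-- Terms of Presburger arithmetic over the structure `(ℕ, +, <, 0, 1)`, with free
variables among `Fin n`. -/
inductive PTerm : ℕ → Type where
  | var : {n : ℕ} → Fin n → PTerm n
  | zero : {n : ℕ} → PTerm n
  | one : {n : ℕ} → PTerm n
  | add : {n : ℕ} → PTerm n → PTerm n → PTerm n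

/-- Evaluation of a Presburger term under a valuation. -/
def PTerm.eval : {n : ℕ} → PTerm n → (Fin n → ℕ) → ℕ
  | _, PTerm.var i, v => v i
  | _, PTerm.zero, _ => 0
  | _, PTerm.one, _ => 1
  | _, PTerm.add s t, v => s.eval v + t.eval v

/-- First-order formulas of Presburger arithmetic (atomic `=` and `<`, negation,
disjunction, existential quantification). -/
inductive PForm : ℕ → Type where
  | eq : {n : ℕ} → PTerm n → PTerm n → PForm n
  | lt : {n : ℕ} → PTerm n → PTerm n → PForm n
  | not : {n : ℕ} → PForm n → PForm n
  | or : {n : ℕ} → PForm n → PForm n → PForm n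
  | ex : {n : ℕ} → PForm (n + 1) → PForm n

/-- Satisfaction of a Presburger formula in `(ℕ, +, <, 0, 1)`. -/
def PForm.Sat : {n : ℕ} → PForm n → (Fin n → ℕ) → Prop
  | _, PForm.eq s t, v => s.eval v = t.eval v
  | _, PForm.lt s t, v => s.eval v < t.eval v
  | _, PForm.not φ, v => ¬ φ.Sat v
  | _, PForm.or φ ψ, v => φ.Sat v ∨ ψ.Sat v
  | _, PForm.ex φ, v => ∃ m : ℕ, φ.Sat (Fin.cons m v)


/-!
Both directions rest on Mathlib's theory of semilinear sets (Ginsburg–Spanier): semilinear subsets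
of `ℕ^d` contain the solution sets of linear equations and are closed under union, complement and
projection, so every definable set is semilinear by induction on the formula; conversely Mathlib
defines every semilinear set by a formula of its own first-order language `(0, 1, +)`, and such
formulas translate into `PForm`.
-/

open Set FirstOrder Language Pointwise

theorem vadd_closure_range_eq_setOf {M ι : Type*} [AddCommMonoid M] [Fintype ι] (a : M)
    (v : ι → M) :
    a +ᵥ (AddSubmonoid.closure (range v) : Set M) = {x | ∃ c : ι → ℕ, x = a + ∑ i, c i • v i} := by
  ext x
  simp only [mem_vadd_set, SetLike.mem_coe, AddSubmonoid.mem_closure_range_iff_of_fintype,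
    vadd_eq_add]
  constructor
  · rintro ⟨_, ⟨c, rfl⟩, rfl⟩
    exact ⟨c, rfl⟩
  · rintro ⟨c, rfl⟩
    exact ⟨_, ⟨c, rfl⟩, rfl⟩

section Semilinear

variable {d : ℕ} {C : Set (Fin d → ℕ)}

theorem isLinear_iff_isLinearSet : IsLinear C ↔ IsLinearSet C := by
  constructor
  · rintro ⟨k, v₀, v, rfl⟩
    exact ⟨v₀, range v, finite_range v, (vadd_closure_range_eq_setOf v₀ v).symm⟩
  · rw [isLinearSet_iff]
    rintro ⟨v₀, t, rfl⟩
    refine ⟨t.card, v₀, Subtype.val ∘ t.equivFin.symm, ?_⟩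
    rw [← vadd_closure_range_eq_setOf, EquivLike.range_comp, Subtype.range_coe]

theorem isSemilinear_iff_isSemilinearSet : IsSemilinear C ↔ IsSemilinearSet C := by
  constructor
  · rintro ⟨m, Cs, hCs, rfl⟩
    exact IsSemilinearSet.iUnion fun i => (isLinear_iff_isLinearSet.1 (hCs i)).isSemilinearSet
  · rw [isSemilinearSet_iff]
    rintro ⟨S, hS, rfl⟩
    refine ⟨S.card, Subtype.val ∘ S.equivFin.symm,
      fun i => isLinear_iff_isLinearSet.2 (hS _ (S.equivFin.symm i).2), ?_⟩
    rw [sUnion_eq_iUnion]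
    exact (S.equivFin.symm.iSup_comp (g := fun s : S => (s : Set (Fin d → ℕ)))).symm

end Semilinear

theorem IsSemilinearSet.setOf_exists_cons {M : Type*} [AddCommMonoid M] {n : ℕ}
    {S : Set (Fin (n + 1) → M)} (hS : IsSemilinearSet S) :
    IsSemilinearSet {v : Fin n → M | ∃ m, Fin.cons m v ∈ S} := by
  convert hS.image (LinearMap.funLeft ℕ M Fin.succ)
  ext v
  constructor
  · rintro ⟨m, hm⟩
    exact ⟨_, hm, rfl⟩
  · rintro ⟨w, hw, rfl⟩
    exact ⟨w 0, by rwa [← Fin.cons_self_tail w] at hw⟩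

theorem isSemilinearSet_setOf_add_lt_add {n : ℕ} (k₁ k₂ : ℕ) (f₁ f₂ : (Fin n → ℕ) →+ ℕ) :
    IsSemilinearSet {v | k₁ + f₁ v < k₂ + f₂ v} := by
  let tail : (Fin (n + 1) → ℕ) →+ (Fin n → ℕ) := (LinearMap.funLeft ℕ ℕ Fin.succ).toAddMonoidHom
  -- `a < b ↔ ∃ m, a + 1 + m = b`, with the witness `m` as a new first coordinate
  convert (isSemilinearSet_setOfPred_eq (k₁ + 1) k₂
    (f₁.comp tail + Pi.evalAddMonoidHom _ 0) (f₂.comp tail)).setOf_exists_cons using 1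
  ext v
  have tail_cons (m : ℕ) : tail (Fin.cons m v) = v := rfl
  simp only [mem_ofPred_eq, AddMonoidHom.add_apply, AddMonoidHom.comp_apply,
    Pi.evalAddMonoidHom_apply, tail_cons, Fin.cons_zero]
  constructor
  · intro h
    exact ⟨k₂ + f₂ v - (k₁ + 1 + f₁ v), by omega⟩
  · rintro ⟨m, hm⟩
    omega

namespace PTerm

variable {α : Type*} {n k : ℕ}

theorem exists_eval_eq_add (t : PTerm n) :
    ∃ (c : ℕ) (f : (Fin n → ℕ) →+ ℕ), ∀ v, t.eval v = c + f v := by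
  induction t with
  | var i => exact ⟨0, Pi.evalAddMonoidHom _ i, fun v => by simp [eval]⟩
  | zero => exact ⟨0, 0, fun v => by simp [eval]⟩
  | one => exact ⟨1, 0, fun v => by simp [eval]⟩
  | add s t ihs iht =>
    obtain ⟨c₁, f₁, h₁⟩ := ihs
    obtain ⟨c₂, f₂, h₂⟩ := iht
    refine ⟨c₁ + c₂, f₁ + f₂, fun v => ?_⟩
    simp only [eval, h₁, h₂, AddMonoidHom.add_apply, add_add_add_comm]

def ofTerm (ρ : α → Fin k) : presburger.Term α → PTerm k
  | .var a => var (ρ a)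
  | .func .zero _ => zero
  | .func .one _ => one
  | .func .add ts => add (ofTerm ρ (ts 0)) (ofTerm ρ (ts 1))

theorem eval_ofTerm (ρ : α → Fin k) (t : presburger.Term α) (w : Fin k → ℕ) :
    (ofTerm ρ t).eval w = t.realize (w ∘ ρ) := by
  induction t with
  | var a => simp [ofTerm, eval]
  | func f ts ih =>
    cases f with
    | zero => simp [ofTerm, eval, Term.realize]
    | one => simp [ofTerm, eval, Term.realize]
    | add => simp [ofTerm, eval, Term.realize, ih]

end PTerm

namespace PForm

variable {α : Type*} {n k : ℕ}

theorem isSemilinearSet_setOf_sat (φ : PForm n) : IsSemilinearSet {v | φ.Sat v} := by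
  induction φ with
  | eq s t =>
    obtain ⟨c₁, f₁, hs⟩ := s.exists_eval_eq_add
    obtain ⟨c₂, f₂, ht⟩ := t.exists_eval_eq_add
    convert isSemilinearSet_setOfPred_eq c₁ c₂ f₁ f₂ using 2 with v
    simp only [Sat, hs, ht]
  | lt s t =>
    obtain ⟨c₁, f₁, hs⟩ := s.exists_eval_eq_add
    obtain ⟨c₂, f₂, ht⟩ := t.exists_eval_eq_add
    convert isSemilinearSet_setOf_add_lt_add c₁ c₂ f₁ f₂ using 2 with v
    simp only [Sat, hs, ht]
  | not φ ih => exact ih.compl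
  | or φ ψ ihφ ihψ => exact ihφ.union ihψ
  | ex φ ih => exact ih.setOf_exists_cons

def liftRenaming (ρ : α ⊕ Fin n → Fin k) : α ⊕ Fin (n + 1) → Fin (k + 1) :=
  Sum.elim (Fin.succ ∘ ρ ∘ Sum.inl) (Fin.lastCases 0 (Fin.succ ∘ ρ ∘ Sum.inr))

theorem cons_comp_liftRenaming (ρ : α ⊕ Fin n → Fin k) (w : Fin k → ℕ) (m : ℕ) :
    Fin.cons m w ∘ liftRenaming ρ = Sum.elim (w ∘ ρ ∘ Sum.inl) (Fin.snoc (w ∘ ρ ∘ Sum.inr) m) := by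
  funext i
  rcases i with a | i
  · rfl
  · induction i using Fin.lastCases <;> simp [liftRenaming]

def ofBoundedFormula : {n k : ℕ} → presburger.BoundedFormula α n → (α ⊕ Fin n → Fin k) → PForm k
  | _, _, .falsum, _ => lt .zero .zero
  | _, _, .equal t₁ t₂, ρ => eq (PTerm.ofTerm ρ t₁) (PTerm.ofTerm ρ t₂)
  | _, _, .rel R _, _ => nomatch R
  | _, _, .imp φ ψ, ρ => or (not (ofBoundedFormula φ ρ)) (ofBoundedFormula ψ ρ)
  | _, _, .all φ, ρ => not (ex (not (ofBoundedFormula φ (liftRenaming ρ))))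

theorem sat_ofBoundedFormula (φ : presburger.BoundedFormula α n) (ρ : α ⊕ Fin n → Fin k)
    (w : Fin k → ℕ) :
    (ofBoundedFormula φ ρ).Sat w ↔ φ.Realize (w ∘ ρ ∘ Sum.inl) (w ∘ ρ ∘ Sum.inr) := by
  induction φ generalizing k with
  | falsum => simp [ofBoundedFormula, Sat, PTerm.eval, BoundedFormula.Realize]
  | equal t₁ t₂ =>
    simp only [ofBoundedFormula, Sat, PTerm.eval_ofTerm, BoundedFormula.Realize,
      ← Function.comp_assoc, Sum.elim_comp_inl_inr]
  | rel R _ => nomatch R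
  | imp φ ψ ihφ ihψ =>
    simp only [ofBoundedFormula, Sat, ihφ, ihψ, BoundedFormula.realize_imp, imp_iff_not_or]
  | all φ ih =>
    simp only [ofBoundedFormula, Sat, ih, BoundedFormula.realize_all, not_exists, not_not]
    refine forall_congr' fun m => ?_
    rw [← Function.comp_assoc, ← Function.comp_assoc, cons_comp_liftRenaming, Sum.elim_comp_inl,
      Sum.elim_comp_inr]

def ofFormula (ρ : α → Fin k) (φ : presburger.Formula α) : PForm k :=
  ofBoundedFormula φ (Sum.elim ρ finZeroElim)

theorem sat_ofFormula (ρ : α → Fin k) (φ : presburger.Formula α) (w : Fin k → ℕ) :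
    (ofFormula ρ φ).Sat w ↔ φ.Realize (w ∘ ρ) := by
  rw [ofFormula, sat_ofBoundedFormula, Formula.Realize]
  congr!

end PForm

theorem IsSemilinearSet.exists_pForm {d : ℕ} {C : Set (Fin d → ℕ)} (hC : IsSemilinearSet C) :
    ∃ φ : PForm d, C = {v | φ.Sat v} := by
  obtain ⟨φ, rfl⟩ := Set.empty_definable_iff.1 (hC.definable (A := ∅))
  exact ⟨PForm.ofFormula id φ, by ext v; simp [PForm.sat_ofFormula]⟩

/-- A subset of `ℕ^d` is semilinear iff it is definable by a Presburger formula. -/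
theorem semilinear_iff_presburger {d : ℕ} (C : Set (Fin d → ℕ)) :
    IsSemilinear C ↔ ∃ φ : PForm d, C = {v | PForm.Sat φ v} := by
  rw [isSemilinear_iff_isSemilinearSet]
  refine ⟨IsSemilinearSet.exists_pForm, ?_⟩
  rintro ⟨φ, rfl⟩
  exact φ.isSemilinearSet_setOf_sat
end
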